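/- arXiv:2012.01672 — 4 statements merged into one kernel-verified Lean document; each statement's English description precedes it below -/
import Mathlib

section
/- If $P$, $Q$, $R$ are orthogonal projections on a Hilbert space such that the spectral norm of the product $PQR$ equals $1$, then there exists a unit vector $v$ with $Pv = Qv = Rv = v$. -/
open scoped InnerProductSpace

/-- For a self-adjoint idempotent `R`, `⟪R v, v⟫ = ‖R v‖²`. -/
lemma proj_inner {H : Type*} [NormedAddCommGroup H] [InnerProductSpace ℂ H]
    [FiniteDimensional ℂ H] (R : H →L[ℂ] H) (hRidem : R ∘L R = R)
    (hRsa : IsSelfAdjoint R) (v : H) :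
    ⟪R v, v⟫_ℂ = (‖R v‖ : ℂ) ^ 2 := by
  have h1 : R (R v) = R v := by
    conv_rhs => rw [← hRidem]
    rfl
  have h2 : ⟪R v, v⟫_ℂ = ⟪R v, R v⟫_ℂ := by
    calc ⟪R v, v⟫_ℂ = ⟪R (R v), v⟫_ℂ := by rw [h1]
    _ = ⟪ContinuousLinearMap.adjoint R (R v), v⟫_ℂ := by rw [hRsa.adjoint_eq]
    _ = ⟪R v, R v⟫_ℂ := ContinuousLinearMap.adjoint_inner_left R v (R v)
  rw [h2, inner_self_eq_norm_sq_to_K]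
  norm_cast

lemma proj_norm_le {H : Type*} [NormedAddCommGroup H] [InnerProductSpace ℂ H]
    [FiniteDimensional ℂ H] (R : H →L[ℂ] H) (hRidem : R ∘L R = R)
    (hRsa : IsSelfAdjoint R) (v : H) : ‖R v‖ ≤ ‖v‖ := by
  have h := proj_inner R hRidem hRsa v
  have hcs := norm_inner_le_norm (𝕜 := ℂ) (R v) v
  rw [h] at hcs
  have h2 : ‖R v‖ ^ 2 ≤ ‖R v‖ * ‖v‖ := by
    simpa [norm_pow] using hcs
  rcases eq_or_lt_of_le (norm_nonneg (R v)) with h0 | h0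
  · rw [← h0]; exact norm_nonneg v
  · nlinarith

lemma proj_fix {H : Type*} [NormedAddCommGroup H] [InnerProductSpace ℂ H]
    [FiniteDimensional ℂ H] (R : H →L[ℂ] H) (hRidem : R ∘L R = R)
    (hRsa : IsSelfAdjoint R) (v : H) (h : ‖R v‖ = ‖v‖) : R v = v := by
  have hi := proj_inner R hRidem hRsa v
  have hre : RCLike.re (⟪v, R v⟫_ℂ) = ‖R v‖ ^ 2 := by
    rw [← inner_conj_symm, hi]
    norm_cast
  have hkey : ‖v - R v‖ ^ 2 = 0 := by
    rw [@norm_sub_sq ℂ, hre, h]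
    ring
  have h0 : v - R v = 0 := by
    have := sq_eq_zero_iff.mp hkey
    simpa using this
  exact (sub_eq_zero.mp h0).symm

/-- If `P`, `Q`, `R` are orthogonal projections on a (finite-dimensional complex) Hilbert
space such that the operator norm of `P Q R` equals `1`, then there is a unit vector `v`
fixed by all three projections. -/
theorem stmt0 {H : Type*} [NormedAddCommGroup H] [InnerProductSpace ℂ H]
    [FiniteDimensional ℂ H]
    (P Q R : H →L[ℂ] H)
    (hPidem : P ∘L P = P) (hQidem : Q ∘L Q = Q) (hRidem : R ∘L R = R)
    (hPsa : IsSelfAdjoint P) (hQsa : IsSelfAdjoint Q) (hRsa : IsSelfAdjoint R)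
    (hnorm : ‖P ∘L Q ∘L R‖ = 1) :
    ∃ v : H, ‖v‖ = 1 ∧ P v = v ∧ Q v = v ∧ R v = v := by
  set T := P ∘L Q ∘L R with hT
  -- H is nontrivial
  rcases subsingleton_or_nontrivial H with hsub | hnt
  · exfalso
    have h0 : T = 0 := Subsingleton.elim _ _
    rw [h0] at hnorm
    simp only [norm_zero] at hnorm
    exact zero_ne_one hnorm
  -- find a maximizer on the unit sphere
  have hsc : IsCompact (Metric.sphere (0 : H) 1) := isCompact_sphere 0 1
  have hsn : (Metric.sphere (0 : H) 1).Nonempty :=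
    NormedSpace.sphere_nonempty.mpr zero_le_one
  obtain ⟨v, hv, hmax⟩ := hsc.exists_isMaxOn hsn
    ((continuous_norm.comp T.continuous).continuousOn)
  have hv1 : ‖v‖ = 1 := by simpa using hv
  -- the max value is at least ‖T‖
  have hle : ‖T‖ ≤ ‖T v‖ := by
    apply ContinuousLinearMap.opNorm_le_bound _ (norm_nonneg _)
    intro x
    rcases eq_or_ne x 0 with rfl | hx
    · simp
    · have hxn : ‖x‖ ≠ 0 := norm_ne_zero_iff.mpr hx
      set u : H := ((‖x‖ : ℂ)⁻¹) • x with hu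
      have hun : ‖u‖ = 1 := by
        rw [hu, norm_smul]
        simp [hxn]
      have hmem : u ∈ Metric.sphere (0 : H) 1 := by simp [hun]
      have h1 : ‖T u‖ ≤ ‖T v‖ := hmax hmem
      have h2 : T u = ((‖x‖ : ℂ)⁻¹) • T x := by rw [hu, map_smul]
      rw [h2, norm_smul] at h1
      simp only [norm_inv, Complex.norm_real, norm_norm] at h1
      calc ‖T x‖ = ‖x‖ * (‖x‖⁻¹ * ‖T x‖) := by field_simp
      _ ≤ ‖x‖ * ‖T v‖ := by
          apply mul_le_mul_of_nonneg_left h1 (norm_nonneg x)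
      _ = ‖T v‖ * ‖x‖ := by ring
  have hTv : ‖T v‖ = 1 := by
    have hub : ‖T v‖ ≤ 1 := by
      calc ‖T v‖ ≤ ‖T‖ * ‖v‖ := T.le_opNorm v
      _ = 1 := by rw [hnorm, hv1, one_mul]
    have hlb : 1 ≤ ‖T v‖ := hnorm ▸ hle
    linarith
  have hTv' : T v = P (Q (R v)) := rfl
  rw [hTv'] at hTv
  -- chain of inequalities
  have hR1 : ‖R v‖ ≤ 1 := hv1 ▸ proj_norm_le R hRidem hRsa v
  have hQ1 : ‖Q (R v)‖ ≤ ‖R v‖ := proj_norm_le Q hQidem hQsa (R v)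
  have hP1 : ‖P (Q (R v))‖ ≤ ‖Q (R v)‖ := proj_norm_le P hPidem hPsa (Q (R v))
  have hRv : ‖R v‖ = 1 := le_antisymm hR1 (by linarith)
  have hQRv : ‖Q (R v)‖ = 1 := le_antisymm (by linarith) (by linarith)
  -- R v = v
  have hRfix : R v = v := proj_fix R hRidem hRsa v (by rw [hRv, hv1])
  have hQfix : Q v = v := by
    have := proj_fix Q hQidem hQsa v (by rw [hRfix] at hQRv; rw [hQRv, hv1])
    exact this
  have hPfix : P v = v := by
    apply proj_fix P hPidem hPsa v
    rw [hRfix, hQfix] at hTv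
    rw [hTv, hv1]
  exact ⟨v, hv1, hPfix, hQfix, hRfix⟩
end

section
/- Let $C$, $D$, $E$ be orthogonal projections on a finite-dimensional Hilbert space satisfying $CE = CDE$, $CE \neq 0$, $CD = CED$, and $DE = DCE$ (the analogous cyclic relations). Then $\|CDE\| = 1$, and consequently there is a unit vector $v$ with $Cv = Dv = Ev = v$. -/
open ContinuousLinearMap

lemma proj_pyth {H : Type*} [NormedAddCommGroup H] [InnerProductSpace ℂ H]
    [FiniteDimensional ℂ H] (C : H →L[ℂ] H) (hidem : C ∘L C = C)
    (hsa : IsSelfAdjoint C) (v : H) :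
    ‖v‖ ^ 2 = ‖C v‖ ^ 2 + ‖v - C v‖ ^ 2 := by
  have hCC : C (C v) = C v := congrFun (congrArg DFunLike.coe hidem) v
  have hz : C (v - C v) = 0 := by simp [map_sub, hCC]
  have h0 : (inner ℂ (C v) (v - C v) : ℂ) = 0 := by
    have hsym := isSelfAdjoint_iff_isSymmetric.mp hsa
    have h := hsym v (v - C v)
    simp only [ContinuousLinearMap.coe_coe] at h
    rw [h, hz, inner_zero_right]
  have h := norm_add_sq_eq_norm_sq_add_norm_sq_of_inner_eq_zero (C v) (v - C v) h0
  have hv : C v + (v - C v) = v := by abel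
  rw [hv] at h
  simpa [pow_two] using h

set_option maxHeartbeats 1600000 in
/-- Let `C`, `D`, `E` be orthogonal projections on a finite-dimensional Hilbert space with
`CE = CDE`, `CE ≠ 0`, `CD = CED` and `DE = DCE`.  Then `‖CDE‖ = 1` and there exists a
unit vector fixed by all three projections. -/
theorem stmt1 {H : Type*} [NormedAddCommGroup H] [InnerProductSpace ℂ H]
    [FiniteDimensional ℂ H]
    (C D E : H →L[ℂ] H)
    (hCidem : C ∘L C = C) (hDidem : D ∘L D = D) (hEidem : E ∘L E = E)
    (hCsa : IsSelfAdjoint C) (hDsa : IsSelfAdjoint D) (hEsa : IsSelfAdjoint E)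
    (h1 : C ∘L E = C ∘L D ∘L E)
    (h2 : C ∘L E ≠ 0)
    (h3 : C ∘L D = C ∘L E ∘L D)
    (h4 : D ∘L E = D ∘L C ∘L E) :
    ‖C ∘L D ∘L E‖ = 1 ∧ ∃ v : H, ‖v‖ = 1 ∧ C v = v ∧ D v = v ∧ E v = v := by
  -- pointwise versions
  have h1p : ∀ x, C (E x) = C (D (E x)) := fun x =>
    congrFun (congrArg DFunLike.coe h1) x
  have h3p : ∀ x, C (D x) = C (E (D x)) := fun x =>
    congrFun (congrArg DFunLike.coe h3) x
  have h4p : ∀ x, D (E x) = D (C (E x)) := fun x =>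
    congrFun (congrArg DFunLike.coe h4) x
  have hCp : ∀ x, C (C x) = C x := fun x => congrFun (congrArg DFunLike.coe hCidem) x
  have hEp : ∀ x, E (E x) = E x := fun x => congrFun (congrArg DFunLike.coe hEidem) x
  -- adjoint of h1 : E ∘ C = E ∘ D ∘ C
  have h1adj : E ∘L C = E ∘L (D ∘L C) := by
    have := congrArg ContinuousLinearMap.adjoint h1
    rw [adjoint_comp, adjoint_comp, adjoint_comp,
      isSelfAdjoint_iff'.mp hCsa, isSelfAdjoint_iff'.mp hDsa,
      isSelfAdjoint_iff'.mp hEsa] at this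
    rw [this, comp_assoc]
  have h1p' : ∀ x, E (C x) = E (D (C x)) := fun x =>
    congrFun (congrArg DFunLike.coe h1adj) x
  -- key idempotency : (CE)^2 = CE
  have hT2p : ∀ x, C (E (C (E x))) = C (E x) := by
    intro x
    calc C (E (C (E x))) = C (E (D (C (E x)))) := by rw [h1p' (E x)]
      _ = C (D (C (E x))) := (h3p (C (E x))).symm
      _ = C (D (E x)) := by rw [← h4p x]
      _ = C (E x) := (h1p x).symm
  -- introduce T = C ∘ E and Q = adjoint T ∘ T  (opaque)
  obtain ⟨T, hT⟩ : ∃ T : H →L[ℂ] H, T = C ∘L E := ⟨_, rfl⟩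
  have hTadj : ContinuousLinearMap.adjoint T = E ∘L C := by
    rw [hT, adjoint_comp, isSelfAdjoint_iff'.mp hCsa, isSelfAdjoint_iff'.mp hEsa]
  obtain ⟨Q, hQ⟩ : ∃ Q : H →L[ℂ] H, Q = ContinuousLinearMap.adjoint T ∘L T := ⟨_, rfl⟩
  have hQp : ∀ x, Q x = E (C (E x)) := by
    intro x
    rw [hQ, hTadj, hT]
    simp only [comp_apply]
    rw [hCp]
  have hQidem : ∀ x, Q (Q x) = Q x := by
    intro x
    calc Q (Q x) = E (C (E (E (C (E x))))) := by rw [hQp x, hQp]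
      _ = E (C (E (C (E x)))) := by rw [hEp (C (E x))]
      _ = E (C (E x)) := congrArg E (hT2p x)
      _ = Q x := (hQp x).symm
  -- Q is self-adjoint
  have hQsa : IsSelfAdjoint Q := by
    rw [isSelfAdjoint_iff', hQ, adjoint_comp, adjoint_adjoint]
  -- norms
  have hnormQ : ‖Q‖ = ‖T‖ * ‖T‖ := by rw [hQ]; exact norm_adjoint_comp_self T
  have hTne : T ≠ 0 := by rw [hT]; exact h2
  have hQne : Q ≠ 0 := by
    intro h
    apply hTne
    have h0 : ‖T‖ * ‖T‖ = 0 := by rw [← hnormQ, h, norm_zero]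
    have hT0 : ‖T‖ = 0 := by nlinarith [norm_nonneg T]
    exact (opNorm_zero_iff T).mp hT0
  have hQcomp : Q ∘L Q = Q := by ext x; exact hQidem x
  have hQnorm1 : ‖Q‖ = 1 := by
    have h5 : ‖Q‖ * ‖Q‖ = ‖Q‖ := by
      conv_lhs => rw [← norm_adjoint_comp_self Q]
      rw [isSelfAdjoint_iff'.mp hQsa, hQcomp]
    have h6 : ‖Q‖ ≠ 0 := fun h => hQne ((opNorm_zero_iff Q).mp h)
    exact mul_right_cancel₀ h6 (h5.trans (one_mul ‖Q‖).symm)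
  have hTnorm1 : ‖T‖ = 1 := by nlinarith [norm_nonneg T]
  constructor
  · rw [← h1, ← hT, hTnorm1]
  -- construct the fixed vector
  · obtain ⟨w, hw⟩ : ∃ w, Q w ≠ 0 := by
      by_contra h
      push_neg at h
      exact hQne (ContinuousLinearMap.ext h)
    have hQwnorm : ‖Q w‖ ≠ 0 := norm_ne_zero_iff.mpr hw
    obtain ⟨v, hv⟩ : ∃ v : H, v = ((‖Q w‖ : ℂ))⁻¹ • Q w := ⟨_, rfl⟩
    have hvnorm : ‖v‖ = 1 := by
      rw [hv, norm_smul]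
      simp only [norm_inv, Complex.norm_real, norm_norm]
      exact inv_mul_cancel₀ hQwnorm
    have hQv : Q v = v := by
      rw [hv, map_smul, hQidem]
    -- E v = v
    have hEv : E v = v := by
      conv_lhs => rw [← hQv, hQp]
      rw [hEp, ← hQp, hQv]
    -- v = E (C v)
    have hvEC : v = E (C v) := by
      conv_lhs => rw [← hQv, hQp (v), hEv]
    -- symmetric forms
    have hsymC := isSelfAdjoint_iff_isSymmetric.mp hCsa
    have hsymE := isSelfAdjoint_iff_isSymmetric.mp hEsa
    have hinner : (inner ℂ v v : ℂ) = inner ℂ (C v) (C v) := by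
      have s1 : (inner ℂ v (E (C v)) : ℂ) = inner ℂ v v := by rw [← hvEC]
      have s2 : (inner ℂ (E v) (C v) : ℂ) = inner ℂ v (E (C v)) := by
        have := hsymE v (C v)
        simp only [ContinuousLinearMap.coe_coe] at this
        exact this
      have s3 : (inner ℂ (C v) (C v) : ℂ) = inner ℂ v (C v) := by
        have := hsymC v (C v)
        simp only [ContinuousLinearMap.coe_coe] at this
        rw [this, hCp]
      calc (inner ℂ v v : ℂ) = inner ℂ v (E (C v)) := s1.symm
        _ = inner ℂ (E v) (C v) := s2.symm
        _ = inner ℂ v (C v) := by rw [hEv]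
        _ = inner ℂ (C v) (C v) := s3.symm
    have hCvnorm : ‖C v‖ = 1 := by
      rw [inner_self_eq_norm_sq_to_K, inner_self_eq_norm_sq_to_K] at hinner
      have h7 : (‖v‖ : ℝ) ^ 2 = ‖C v‖ ^ 2 := by exact_mod_cast hinner
      rw [hvnorm] at h7
      nlinarith [norm_nonneg (C v)]
    -- C v = v
    have hCv : C v = v := by
      have hp := proj_pyth C hCidem hCsa v
      rw [hvnorm, hCvnorm] at hp
      have h8 : ‖v - C v‖ = 0 := by nlinarith [norm_nonneg (v - C v)]
      exact (sub_eq_zero.mp (norm_eq_zero.mp h8)).symm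
    -- D v = v
    have hCDv : C (D v) = v := by
      have h9 := h1p v
      rw [hEv, hCv] at h9
      exact h9.symm
    have hDv : D v = v := by
      have hp1 := proj_pyth C hCidem hCsa (D v)
      rw [hCDv, hvnorm] at hp1
      have hp2 := proj_pyth D hDidem hDsa v
      rw [hvnorm] at hp2
      have e1 : 1 ≤ ‖D v‖ ^ 2 := by nlinarith [sq_nonneg (‖D v - C (D v)‖)]
      have e2 : ‖D v‖ ^ 2 ≤ 1 := by nlinarith [sq_nonneg (‖v - D v‖)]
      have hsq : ‖D v‖ ^ 2 = 1 := le_antisymm e2 e1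
      have h10 : ‖v - D v‖ = 0 := by nlinarith [sq_nonneg (‖v - D v‖), norm_nonneg (v - D v)]
      exact (sub_eq_zero.mp (norm_eq_zero.mp h10)).symm
    exact ⟨v, hvnorm, hCv, hDv, hEv⟩
end

section
/- Let $P_0, \dots, P_{d-1}$ be permutations of $\{0,\dots,d-1\}$ that are pairwise disjoint as perfect matchings, i.e., $P_i(m) \neq P_k(m)$ for all $m$ whenever $i \neq k$. Identify each $P_i$ with the permutation matrix $\sum_m |P_i(m)\rangle\langle m|$ on $\mathbb{C}^d$. Then the $d^2$ matrices $\{P_i Z_d^j : 0 \le i, j < d\}$ are unitary and pairwise orthogonal with respect to the Hilbert-Schmidt inner product. -/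
open Matrix

/-- A primitive `d`-th root of unity. -/
noncomputable def omega (d : ℕ) : ℂ := Complex.exp (2 * Real.pi * Complex.I / d)

/-- The clock operator `Z_d` on `ℂ^d`. -/
noncomputable def clock (d : ℕ) : Matrix (Fin d) (Fin d) ℂ :=
  Matrix.diagonal fun k => omega d ^ (k : ℕ)

/-- The permutation matrix `∑ₘ |σ(m)⟩⟨m|` of a permutation `σ` of `{0, …, d-1}`. -/
def permMat {d : ℕ} (σ : Equiv.Perm (Fin d)) : Matrix (Fin d) (Fin d) ℂ :=
  Matrix.of fun i j => if i = σ j then 1 else 0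

lemma conj_omega_mul (d : ℕ) : (starRingEnd ℂ) (omega d) * omega d = 1 := by
  rw [omega, ← Complex.exp_conj, ← Complex.exp_add]
  have : (starRingEnd ℂ) (2 * Real.pi * Complex.I / d) = -(2 * Real.pi * Complex.I / d) := by
    simp [map_div₀, _root_.map_mul, map_ofNat, Complex.conj_I, Complex.conj_ofReal]
    ring
  rw [this, neg_add_cancel, Complex.exp_zero]

lemma omega_prim (d : ℕ) (hd : 0 < d) : IsPrimitiveRoot (omega d) d := by
  have := Complex.isPrimitiveRoot_exp d hd.ne'
  convert this using 2
  rfl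

lemma conj_omega (d : ℕ) : (starRingEnd ℂ) (omega d) = (omega d)⁻¹ :=
  (inv_eq_of_mul_eq_one_left (conj_omega_mul d)).symm

lemma permMat_mem {d : ℕ} (σ : Equiv.Perm (Fin d)) :
    permMat σ ∈ Matrix.unitaryGroup (Fin d) ℂ := by
  rw [Matrix.mem_unitaryGroup_iff']
  ext a b
  simp [Matrix.mul_apply, permMat, Matrix.conjTranspose_apply, Matrix.one_apply,
    apply_ite, ite_and, Finset.sum_ite_eq, σ.injective.eq_iff, eq_comm]

lemma clock_mem (d : ℕ) : clock d ∈ Matrix.unitaryGroup (Fin d) ℂ := by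
  rw [Matrix.mem_unitaryGroup_iff', Matrix.star_eq_conjTranspose]
  rw [clock, Matrix.diagonal_conjTranspose, Matrix.diagonal_mul_diagonal]
  convert Matrix.diagonal_one using 2
  ext k
  simp only [Pi.star_apply, star_pow]
  rw [← mul_pow]
  rw [show star (omega d) = (starRingEnd ℂ) (omega d) from rfl, conj_omega_mul, one_pow]

/-- For pairwise disjoint permutations `P₀, …, P_{d-1}`, the `d²` matrices `P_i Z_d^j`
are unitary and pairwise orthogonal in the Hilbert–Schmidt inner product. -/
theorem stmt8 (d : ℕ) (hd : 0 < d) (P : Fin d → Equiv.Perm (Fin d))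
    (hdisj : ∀ i k, i ≠ k → ∀ m, P i m ≠ P k m) :
    (∀ i j : Fin d, permMat (P i) * clock d ^ (j : ℕ) ∈ Matrix.unitaryGroup (Fin d) ℂ) ∧
    (∀ i j k l : Fin d, (i, j) ≠ (k, l) →
      ((permMat (P i) * clock d ^ (j : ℕ))ᴴ *
        (permMat (P k) * clock d ^ (l : ℕ))).trace = 0) := by
  have hA : ∀ (σ : Equiv.Perm (Fin d)) (n : ℕ) (x y : Fin d),
      (permMat σ * clock d ^ n) x y = if x = σ y then (omega d ^ (y : ℕ)) ^ n else 0 := by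
    intro σ n x y
    rw [show clock d ^ n = Matrix.diagonal (fun m : Fin d => (omega d ^ (m : ℕ)) ^ n) by
      rw [clock, Matrix.diagonal_pow]; rfl]
    rw [Matrix.mul_diagonal]
    simp [permMat, ite_mul]
  constructor
  · intro i j
    exact mul_mem (permMat_mem (P i)) (pow_mem (clock_mem d) _)
  · intro i j k l hne
    have htr : ((permMat (P i) * clock d ^ (j : ℕ))ᴴ *
        (permMat (P k) * clock d ^ (l : ℕ))).trace
        = ∑ a : Fin d, (if P i a = P k a then
            (starRingEnd ℂ) ((omega d ^ (a : ℕ)) ^ (j : ℕ)) * (omega d ^ (a : ℕ)) ^ (l : ℕ) else 0) := by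
      rw [Matrix.trace]
      congr 1
      ext a
      simp only [Matrix.diag_apply, Matrix.mul_apply, Matrix.conjTranspose_apply, hA]
      simp only [apply_ite star, star_zero, ite_mul, mul_ite, zero_mul, mul_zero]
      rw [Finset.sum_ite_eq' Finset.univ (P k a)]
      simp [RCLike.star_def, eq_comm]
    rw [htr]
    by_cases hik : i = k
    · subst hik
      have hjl : j ≠ l := by simpa using hne
      have hprim := omega_prim d hd
      have hζc : ∀ a : Fin d, (starRingEnd ℂ) ((omega d ^ (a : ℕ)) ^ (j : ℕ)) * (omega d ^ (a : ℕ)) ^ (l : ℕ)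
          = ((starRingEnd ℂ) (omega d) ^ (j : ℕ) * omega d ^ (l : ℕ)) ^ (a : ℕ) := by
        intro a
        rw [map_pow, map_pow]
        ring
      simp only [if_pos rfl, hζc, ite_true]
      set ζ := (starRingEnd ℂ) (omega d) ^ (j : ℕ) * omega d ^ (l : ℕ) with hζdef
      have hζd : ζ ^ d = 1 := by
        rw [hζdef, mul_pow, ← pow_mul, ← pow_mul, mul_comm (j : ℕ) d, mul_comm (l : ℕ) d,
          pow_mul, pow_mul, ← map_pow, hprim.pow_eq_one, _root_.map_one, one_pow, one_pow,
          one_mul]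
      have hζ1 : ζ ≠ 1 := by
        intro h
        rw [hζdef, conj_omega, inv_pow] at h
        have hω : omega d ^ (l : ℕ) = omega d ^ (j : ℕ) := by
          have hne0 : omega d ^ (j : ℕ) ≠ 0 := pow_ne_zero _ (Complex.exp_ne_zero _)
          field_simp at h
          exact h
        exact hjl (Fin.ext (hprim.pow_inj l.isLt j.isLt hω)).symm
      rw [Fin.sum_univ_eq_sum_range (fun a => ζ ^ a) d, geom_sum_eq hζ1, hζd, sub_self, zero_div]
    · apply Finset.sum_eq_zero
      intro a _
      rw [if_neg (hdisj i k hik a)]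
end

section
/- Let $d \geq 4$ be a power of two, and let $B_1$ be the set of $d \times d$ matrices obtained as $k$-fold tensor products of the $2\times 2$ matrices $\{I, X, Z, XZ\}$ (where $d = 2^k$). Then $B_1$ is not equivalent to the clock-and-shift basis $B_2 = \{X_d^a Z_d^b\}$: there do not exist unitaries $V, W$ on $\mathbb{C}^d$ and unit complex numbers $\alpha_i$ with $B_2 = \{\alpha_i V U_i W : U_i \in B_1\}$. -/
/-!
If `Z_d = α V M W` and `I = β V N W` with Pauli strings `M, N`, then `W = β⁻¹ (V N)⁻¹`, so `Z_d` is
a multiple of the conjugate `V (M N⁻¹) V⁻¹`. Pauli strings square to `±1` and their products are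
again Pauli strings up to sign, so `(M N⁻¹)²`, and hence `Z_d²`, is a scalar. But the diagonal of
`Z_d²` contains both `1` and `ω²`, which differ because `ω` is a primitive `d`-th root of unity
and `d > 2`.
-/

/-- The shift operator `X_d` on `ℂ^d`. -/
noncomputable def shift (d : ℕ) : Matrix (Fin d) (Fin d) ℂ :=
  Matrix.of fun i j => if (i : ℕ) = ((j : ℕ) + 1) % d then 1 else 0

/-- `k`-fold Kronecker (tensor) product of `2×2` matrices, as a matrix indexed by
`Fin k → Fin 2`. -/
def kron (k : ℕ) (f : Fin k → Matrix (Fin 2) (Fin 2) ℂ) :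
    Matrix (Fin k → Fin 2) (Fin k → Fin 2) ℂ :=
  Matrix.of fun i j => ∏ t, f t (i t) (j t)

section ScalarSquares

variable {K R : Type*} [Field K] [Ring R] [Algebra K R] [IsDedekindFiniteMonoid R]

theorem mul_self_eq_smul_one_of_smul_mul_eq_one {v w m n : R} {β c c' : K} (hβ : β ≠ 0)
    (hc : c ≠ 0) (hvnw : β • (v * n * w) = 1) (hn : n * n = c • 1)
    (hmn : m * n * (m * n) = c' • 1) :
    v * m * w * (v * m * w) = (c' / (β * c) ^ 2) • 1 := by
  have hwvn : w * v * n = β⁻¹ • 1 := by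
    have : w * (β • (v * n)) = 1 := mul_eq_one_comm.mp (by rwa [smul_mul_assoc])
    rw [mul_smul_comm, ← mul_assoc] at this
    rw [← this, smul_smul, inv_mul_cancel₀ hβ, one_smul]
  have hwv : w * v = (β * c)⁻¹ • n := calc
    w * v = c⁻¹ • (w * v * (n * n)) := by
      rw [hn, mul_smul_comm, mul_one, smul_smul, inv_mul_cancel₀ hc, one_smul]
    _ = c⁻¹ • (w * v * n * n) := by rw [mul_assoc (w * v)]
    _ = (β * c)⁻¹ • n := by rw [hwvn, smul_mul_assoc, one_mul, smul_smul, mul_inv, mul_comm]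
  have hmnm : m * n * m = (c' / c) • n := calc
    m * n * m = c⁻¹ • (m * n * m * (n * n)) := by
      rw [hn, mul_smul_comm, mul_one, smul_smul, inv_mul_cancel₀ hc, one_smul]
    _ = c⁻¹ • (m * n * (m * n) * n) := by simp only [mul_assoc]
    _ = (c' / c) • n := by rw [hmn, smul_mul_assoc, one_mul, smul_smul, div_eq_inv_mul]
  have hvnw' : v * n * w = β⁻¹ • 1 := by
    rw [← hvnw, smul_smul, inv_mul_cancel₀ hβ, one_smul]
  calc v * m * w * (v * m * w) = v * (m * (w * v) * m) * w := by simp only [mul_assoc]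
    _ = ((β * c)⁻¹ * (c' / c)) • (v * n * w) := by
      rw [hwv, mul_smul_comm, smul_mul_assoc, hmnm]
      simp only [mul_smul_comm, smul_mul_assoc, smul_smul]
    _ = (c' / (β * c) ^ 2) • 1 := by
      rw [hvnw', smul_smul]
      congr 1
      field_simp

end ScalarSquares

theorem kron_mul {k : ℕ} (f g : Fin k → Matrix (Fin 2) (Fin 2) ℂ) :
    kron k f * kron k g = kron k (fun t => f t * g t) := by
  ext i j
  simp only [kron, Matrix.mul_apply, Matrix.of_apply, Finset.prod_univ_sum, Fintype.piFinset_univ,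
    Finset.prod_mul_distrib]

theorem kron_smul_one {k : ℕ} (c : Fin k → ℂ) :
    kron k (fun t => c t • (1 : Matrix (Fin 2) (Fin 2) ℂ)) = (∏ t, c t) • 1 := by
  ext i j
  simp only [kron, Matrix.of_apply, Matrix.smul_apply, Matrix.one_apply, smul_eq_mul,
    Finset.prod_mul_distrib, Finset.prod_boole, Finset.mem_univ, true_implies, funext_iff]

theorem kron_mul_self_eq_smul_one {k : ℕ} {f : Fin k → Matrix (Fin 2) (Fin 2) ℂ} {c : Fin k → ℂ}
    (h : ∀ t, f t * f t = c t • 1) : kron k f * kron k f = (∏ t, c t) • 1 := by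
  rw [kron_mul, funext h, kron_smul_one]

def pauliSet : Set (Matrix (Fin 2) (Fin 2) ℂ) :=
  {1, !![(0:ℂ), 1; 1, 0], !![(1:ℂ), 0; 0, -1], !![(0:ℂ), 1; 1, 0] * !![(1:ℂ), 0; 0, -1]}

theorem one_mem_pauliSet : 1 ∈ pauliSet := Set.mem_insert _ _

theorem pauliSet_mul_mul_self {A B : Matrix (Fin 2) (Fin 2) ℂ} (hA : A ∈ pauliSet)
    (hB : B ∈ pauliSet) : ∃ c : ℂ, (c = 1 ∨ c = -1) ∧ A * B * (A * B) = c • 1 := by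
  simp only [pauliSet, Set.mem_insert_iff, Set.mem_singleton_iff] at hA hB
  rcases hA with rfl | rfl | rfl | rfl <;> rcases hB with rfl | rfl | rfl | rfl <;>
    first
      | (refine ⟨1, .inl rfl, ?_⟩
         ext i j; fin_cases i <;> fin_cases j <;> simp [Matrix.mul_apply]; done)
      | (refine ⟨-1, .inr rfl, ?_⟩
         ext i j; fin_cases i <;> fin_cases j <;> simp [Matrix.mul_apply])

theorem clock_mul_self_ne_smul_one {d : ℕ} (hd : 2 < d) (s : ℂ) :
    clock d * clock d ≠ s • 1 := by
  intro h
  have h0 := congrFun₂ h ⟨0, by omega⟩ ⟨0, by omega⟩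
  have h1 := congrFun₂ h ⟨1, by omega⟩ ⟨1, by omega⟩
  simp only [clock, Matrix.diagonal_mul_diagonal, Matrix.diagonal_apply_eq, Matrix.smul_apply,
    Matrix.one_apply_eq, smul_eq_mul, mul_one, pow_zero, pow_one] at h0 h1
  have hsq : omega d ^ 2 = 1 := by rw [sq, h1, ← h0]
  have hdvd : d ∣ 2 := ((Complex.isPrimitiveRoot_exp d (by omega)).pow_eq_one_iff_dvd 2).mp hsq
  exact absurd (Nat.le_of_dvd two_pos hdvd) (by omega)

/-- For `d = 2^k ≥ 4`, the basis of `k`-fold tensor products of `{I, X, Z, XZ}` is not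
equivalent (via `Uᵢ ↦ αᵢ V Uᵢ W` with `V, W` unitary and `|αᵢ| = 1`) to the
`d`-dimensional clock-and-shift basis. -/
theorem stmt9 (k : ℕ) (hk : 2 ≤ k) (e : (Fin k → Fin 2) ≃ Fin (2 ^ k)) :
    ¬ ∃ V ∈ Matrix.unitaryGroup (Fin (2 ^ k)) ℂ,
      ∃ W ∈ Matrix.unitaryGroup (Fin (2 ^ k)) ℂ,
      {A : Matrix (Fin (2 ^ k)) (Fin (2 ^ k)) ℂ |
          ∃ a b : Fin (2 ^ k), A = shift (2 ^ k) ^ (a : ℕ) * clock (2 ^ k) ^ (b : ℕ)}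
        = {A : Matrix (Fin (2 ^ k)) (Fin (2 ^ k)) ℂ |
            ∃ f : Fin k → Matrix (Fin 2) (Fin 2) ℂ,
              (∀ t, f t ∈ ({1, !![(0:ℂ), 1; 1, 0], !![(1:ℂ), 0; 0, -1],
                  !![(0:ℂ), 1; 1, 0] * !![(1:ℂ), 0; 0, -1]} :
                    Set (Matrix (Fin 2) (Fin 2) ℂ))) ∧
              ∃ α : ℂ, ‖α‖ = 1 ∧
                A = α • (V * Matrix.reindex e e (kron k f) * W)} := by
  rintro ⟨V, -, W, -, hset⟩
  have hd : 2 < 2 ^ k := by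
    calc 2 < 2 ^ 2 := by norm_num
      _ ≤ 2 ^ k := Nat.pow_le_pow_right two_pos hk
  obtain ⟨f, hf, α, -, hZ⟩ :=
    (Set.ext_iff.mp hset (clock (2 ^ k))).mp ⟨⟨0, by omega⟩, ⟨1, by omega⟩, by simp⟩
  obtain ⟨g, hg, β, hβ, hI⟩ := (Set.ext_iff.mp hset 1).mp ⟨⟨0, by omega⟩, ⟨0, by omega⟩, by simp⟩
  choose cg hcg using fun t => pauliSet_mul_mul_self (hg t) one_mem_pauliSet
  choose c hc using fun t => pauliSet_mul_mul_self (hf t) (hg t)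
  let φ := Matrix.reindexAlgEquiv ℂ ℂ e
  have hN : φ (kron k g) * φ (kron k g) = (∏ t, cg t) • 1 := by
    rw [← map_mul, kron_mul_self_eq_smul_one fun t => by simpa using (hcg t).2, map_smul, map_one]
  have hMN : φ (kron k f) * φ (kron k g) * (φ (kron k f) * φ (kron k g)) = (∏ t, c t) • 1 := by
    rw [← map_mul, ← map_mul, kron_mul, kron_mul_self_eq_smul_one fun t => (hc t).2, map_smul,
      map_one]
  have hcg0 : ∏ t, cg t ≠ 0 :=
    Finset.prod_ne_zero_iff.mpr fun t _ => by rcases (hcg t).1 with h | h <;> simp [h]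
  have hβ0 : β ≠ 0 := norm_ne_zero_iff.mp (hβ ▸ one_ne_zero)
  refine clock_mul_self_ne_smul_one hd (α * α * ((∏ t, c t) / (β * ∏ t, cg t) ^ 2)) ?_
  rw [hZ, smul_mul_smul_comm, ← smul_smul (α * α)]
  exact congrArg _ (mul_self_eq_smul_one_of_smul_mul_eq_one hβ0 hcg0 hI.symm hN hMN)
end
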